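/- Assume 0 ∈ S. For every m ≥ 1 and all a_1, ..., a_m ∈ S, the following identity holds in 𝕀(S)[[t_1, ..., t_m]]: I(a_1; a_2, ..., a_m; 0 | t_1; ...; t_m) = (−1)^{m−1} · I(0; a_m, ..., a_2; a_1 | −t_m; −t_{m−1}; ...; −t_1). In particular, for m = 1, Σ_{n ≥ 0} I(a; 0^n; 0) · t^n = Σ_{n ≥ 0} I(0; 0^n; a) · (−t)^n. -/

import Mathlib

/-!
STATEMENT 11. In `𝕀(S)[[t₁, …, t_m]]` (coefficientwise):
`I(a₁; a₂, …, a_m; 0 | t₁; …; t_m) = (−1)^{m−1} · I(0; a_m, …, a₂; a₁ | −t_m; …; −t₁)`;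
in particular `Σ_{n ≥ 0} I(a; 0ⁿ; 0) tⁿ = Σ_{n ≥ 0} I(0; 0ⁿ; a) (−t)ⁿ`.
(The equality of power series is stated coefficient by coefficient; a sign `(−1)^{Σ nᵢ}`
accounts for the substitution `tᵢ ↦ −tᵢ`.)
-/

open scoped TensorProduct

/-- The multiset of all shuffles of two lists. -/
def shuffles {α : Type*} : List α → List α → Multiset (List α)
  | [], l => {l}
  | x :: l, [] => {x :: l}
  | a :: l, b :: m =>
      ((shuffles l (b :: m)).map (a :: ·)) + ((shuffles (a :: l) m).map (b :: ·))
  termination_by l m => l.length + m.length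

/-- Generators `𝕀(s₀; s₁, …, s_m; s_{m+1})`, `m ≥ 1`. -/
abbrev IGen (S : Type*) := S × {l : List S // l ≠ []} × S

/-- The free commutative ℚ-algebra `𝕀̃(S)`. -/
abbrev Itilde (S : Type*) := MvPolynomial (IGen S) ℚ

/-- The element `𝕀(a; l; b)` of `𝕀̃(S)`, with the convention `𝕀(a; b) = 1`. -/
noncomputable def ISym {S : Type*} (a : S) (l : List S) (b : S) : Itilde S :=
  match l with
  | [] => 1
  | x :: xs => MvPolynomial.X (a, ⟨x :: xs, by simp⟩, b)

/-- All markings of a list: decompositions `l = b₀ ++ [c₁] ++ b₁ ++ … ++ [c_k] ++ b_k`. -/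
def marks {α : Type*} : List α → List (List α × List (List α))
  | [] => [([], [[]])]
  | x :: l =>
      ((marks l).map fun p => (x :: p.1, [] :: p.2)) ++
      ((marks l).map fun p => (p.1, (x :: p.2.headI) :: p.2.tail))

/-- `blockProd f a bs cs b = f(a; b₀; c₁) · f(c₁; b₁; c₂) ⋯ f(c_k; b_k; b)`. -/
def blockProd {S M : Type*} [CommMonoid M] (f : S → List S → S → M) :
    S → List (List S) → List S → S → M
  | _, [], _, _ => 1
  | a, [bl], [], b => f a bl b
  | a, bl :: bls, c :: cs, b => f a bl c * blockProd f c bls cs b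
  | _, _ :: _ :: _, [], _ => 1

/-- The coproduct `Δ` of `𝕀̃(S)` (Goncharov's formula on generators). -/
noncomputable def Delta {S : Type*} : Itilde S →ₐ[ℚ] Itilde S ⊗[ℚ] Itilde S :=
  MvPolynomial.aeval fun g : IGen S =>
    ((marks g.2.1.1).map fun p =>
      ISym g.1 p.1 g.2.2 ⊗ₜ[ℚ] blockProd ISym g.1 p.2 p.1 g.2.2).sum

/-- The ideal of the shuffle, path composition and loop relations. -/
noncomputable def Jideal (S : Type*) : Ideal (Itilde S) :=
  Ideal.span
    ({p | ∃ a b l₁ l₂, p = ISym a l₁ b * ISym a l₂ b -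
        ((shuffles l₁ l₂).map fun w => ISym a w b).sum} ∪
     {p | ∃ a b x l, p = ISym a l b -
        ∑ k ∈ Finset.range (l.length + 1), ISym a (l.take k) x * ISym x (l.drop k) b} ∪
     {p | ∃ a l, l ≠ [] ∧ p = ISym a l a})

/-- The commutative graded Hopf algebra `𝕀(S) := 𝕀̃(S)/J` of iterated integrals. -/
abbrev IS (S : Type*) := Itilde S ⧸ Jideal S

/-- The image `I(a; l; b)` of `𝕀(a; l; b)` in `𝕀(S)`. -/
noncomputable def Imap {S : Type*} (a : S) (l : List S) (b : S) : IS S :=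
  Ideal.Quotient.mk (Jideal S) (ISym a l b)

/-- `wz z n₀ [(a₁,n₁), …, (a_m,n_m)]` is the list `0^{n₀} a₁ 0^{n₁} a₂ ⋯ a_m 0^{n_m}`
(with `z` playing the role of `0`). -/
def wz {S : Type*} (z : S) (n0 : ℕ) (l : List (S × ℕ)) : List S :=
  List.replicate n0 z ++ l.flatMap fun p => p.1 :: List.replicate p.2 z

/-!
Path reversal: `I(b; l; a) = (-1)^{|l|} I(a; lᵣ; b)`, where `lᵣ` is `l` reversed. Composing paths
through `a`, the loop relation gives `0 = I(b; l; b) = Σₖ I(b; l₁…lₖ; a) I(a; lₖ₊₁…lₙ; b)`. By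
induction every factor `I(b; l₁…lₖ; a)` with `k < n` may be reversed, and the shuffle relation turns
the products into `(-1)^k I(a; (lₖ…l₁) ⧢ (lₖ₊₁…lₙ); b)`. The alternating sum of these shuffles,
extended to `k = n`, vanishes (splitting each shuffle by its first letter makes it telescope), so
only the term `k = n` survives. The theorem is this formula applied to `0^{n₀} a₁ 0^{n₁} ⋯ a_m 0^{n_m}`.
-/

section Shuffles

variable {α : Type*}

@[simp]
lemma shuffles_nil_left (l : List α) : shuffles [] l = {l} := by
  rw [shuffles]

@[simp]
lemma shuffles_nil_right (l : List α) : shuffles l [] = {l} := by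
  cases l <;> rw [shuffles]

lemma shuffles_cons_cons (x y : α) (u v : List α) :
    shuffles (x :: u) (y :: v) =
      (shuffles u (y :: v)).map (x :: ·) + (shuffles (x :: u) v).map (y :: ·) := by
  rw [shuffles]

variable {R : Type*} [Ring R] (f : List α → R)

/-- `Σₖ (-1)^k f((vₖ ⋯ v₁ u) ⧢ (vₖ₊₁ ⋯ vₙ))`, with `f` extended additively to multisets of words. -/
def altShuffleSum (u v : List α) : R :=
  ∑ k ∈ Finset.range (v.length + 1),
    (-1) ^ k * ((shuffles ((v.take k).reverse ++ u) (v.drop k)).map f).sum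

lemma altShuffleSum_nil_right (u : List α) : altShuffleSum f u [] = f u := by
  simp [altShuffleSum]

lemma altShuffleSum_cons_right (u : List α) (y : α) (v : List α) :
    altShuffleSum f u (y :: v) =
      ((shuffles u (y :: v)).map f).sum - altShuffleSum f (y :: u) v := by
  simp only [altShuffleSum, List.length_cons, Finset.sum_range_succ' _ (v.length + 1),
    List.take_succ_cons, List.drop_succ_cons, List.reverse_cons, List.append_assoc,
    List.singleton_append, pow_succ, List.take_zero, List.drop_zero, List.reverse_nil,
    List.nil_append, pow_zero, one_mul, mul_neg_one, neg_mul, Finset.sum_neg_distrib]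
  abel

lemma altShuffleSum_cons_left (x : α) (u v : List α) :
    altShuffleSum f (x :: u) v = ((shuffles u v).map fun w => f (x :: w)).sum := by
  induction v generalizing x u with
  | nil => simp [altShuffleSum_nil_right]
  | cons y v ih =>
    rw [altShuffleSum_cons_right, ih, shuffles_cons_cons, Multiset.map_add, Multiset.sum_add,
      Multiset.map_map, Multiset.map_map]
    simp only [Function.comp_def, add_sub_cancel_right]

lemma altShuffleSum_nil_left {l : List α} (hl : l ≠ []) : altShuffleSum f [] l = 0 := by
  obtain ⟨y, v, rfl⟩ := List.exists_cons_of_ne_nil hl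
  simp [altShuffleSum_cons_right, altShuffleSum_cons_left]

end Shuffles

section Relations

variable {S : Type*}

lemma Imap_nil (a b : S) : Imap a [] b = 1 :=
  map_one _

lemma Imap_loop (a : S) {l : List S} (hl : l ≠ []) : Imap a l a = 0 :=
  Ideal.Quotient.eq_zero_iff_mem.2 <| Ideal.subset_span <| Or.inr ⟨a, l, hl, rfl⟩

lemma Imap_mul (a b : S) (u v : List S) :
    Imap a u b * Imap a v b = ((shuffles u v).map fun w => Imap a w b).sum := by
  have h := Ideal.Quotient.eq_zero_iff_mem.2 <| (Ideal.subset_span <| Or.inl <| Or.inl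
    ⟨a, b, u, v, rfl⟩ : ISym a u b * ISym a v b - ((shuffles u v).map fun w => ISym a w b).sum
      ∈ Jideal S)
  rw [map_sub, sub_eq_zero, map_mul, map_multiset_sum, Multiset.map_map] at h
  exact h

lemma Imap_eq_sum_mul (a b x : S) (l : List S) :
    Imap a l b = ∑ k ∈ Finset.range (l.length + 1), Imap a (l.take k) x * Imap x (l.drop k) b := by
  have h := Ideal.Quotient.eq_zero_iff_mem.2 <| (Ideal.subset_span <| Or.inl <| Or.inr
    ⟨a, b, x, l, rfl⟩ : ISym a l b -
      ∑ k ∈ Finset.range (l.length + 1), ISym a (l.take k) x * ISym x (l.drop k) b ∈ Jideal S)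
  simp only [map_sub, sub_eq_zero, map_sum, map_mul] at h
  exact h

end Relations

theorem Imap_path_reversal {S : Type*} (a b : S) (l : List S) :
    Imap b l a = (-1) ^ l.length * Imap a l.reverse b := by
  induction hn : l.length using Nat.strong_induction_on generalizing l with
  | _ n ih =>
  subst hn
  rcases eq_or_ne l [] with rfl | hl
  · simp [Imap_nil]
  have hterm : ∀ k ∈ Finset.range l.length, Imap b (l.take k) a * Imap a (l.drop k) b =
      (-1) ^ k * ((shuffles (l.take k).reverse (l.drop k)).map (Imap a · b)).sum := by
    intro k hk
    have hk : k < l.length := Finset.mem_range.1 hk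
    rw [ih _ (by simp; omega) _ rfl, List.length_take_of_le hk.le, mul_assoc, Imap_mul]
  have hloop := Imap_eq_sum_mul b b a l
  rw [Imap_loop b hl, Finset.sum_range_succ, Finset.sum_congr rfl hterm, List.take_length,
    List.drop_length, Imap_nil, mul_one] at hloop
  have halt := altShuffleSum_nil_left (Imap a · b) hl
  rw [altShuffleSum, Finset.sum_range_succ, List.take_length, List.drop_length,
    shuffles_nil_right] at halt
  simp only [List.append_nil, Multiset.map_singleton, Multiset.sum_singleton] at halt
  linear_combination -halt - hloop

section Words

variable {S : Type*} (z : S)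

lemma wz_cons (n₀ : ℕ) (c : S) (m : ℕ) (L : List (S × ℕ)) :
    wz z n₀ ((c, m) :: L) = List.replicate n₀ z ++ c :: wz z m L := by
  simp [wz]

lemma wz_append_singleton (n₀ : ℕ) (L : List (S × ℕ)) (c : S) (m : ℕ) :
    wz z n₀ (L ++ [(c, m)]) = wz z n₀ L ++ c :: List.replicate m z := by
  simp [wz]

lemma length_wz_ofFn {r : ℕ} (b : Fin r → S) (n : Fin (r + 1) → ℕ) :
    (wz z (n 0) (List.ofFn fun i => (b i, n i.succ))).length = r + ∑ i, n i := by
  simp only [wz, List.length_append, List.length_replicate, List.length_flatMap,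
    List.length_cons, List.map_ofFn, List.sum_ofFn, Function.comp_apply, Finset.sum_add_distrib,
    Finset.sum_const, Finset.card_univ, Fintype.card_fin, smul_eq_mul, mul_one, Fin.sum_univ_succ]
  ring

lemma reverse_wz_ofFn {r : ℕ} (b : Fin r → S) (n : Fin (r + 1) → ℕ) :
    (wz z (n 0) (List.ofFn fun i => (b i, n i.succ))).reverse =
      wz z (n (Fin.last r)) (List.ofFn fun j => (b j.rev, n j.rev.castSucc)) := by
  induction r with
  | zero => simp [wz]
  | succ r ih =>
    rw [List.ofFn_succ, wz_cons, List.reverse_append, List.reverse_cons, List.reverse_replicate,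
      ih (fun i => b i.succ) (fun i => n i.succ), List.ofFn_succ', List.concat_eq_append,
      wz_append_singleton]
    simp [Fin.rev_castSucc]

end Words

theorem Imap_reverse_generating_series {S : Type*} (z : S) (r : ℕ) (a : Fin (r + 1) → S) :
    -- m := r + 1 ≥ 1, and a 0, …, a r are a₁, …, a_m
    (∀ n : Fin (r + 1) → ℕ,
      Imap (a 0) (wz z (n 0) (List.ofFn fun i : Fin r => (a i.succ, n i.succ))) z =
        (-1 : IS S) ^ (r + ∑ i, n i) *
          Imap z (wz z (n (Fin.last r))
            (List.ofFn fun β : Fin r =>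
              (a ⟨r - (β : ℕ), by omega⟩, n ⟨r - 1 - (β : ℕ), by omega⟩))) (a 0)) ∧
    -- the particular case m = 1
    (∀ (x : S) (n : ℕ),
      Imap x (List.replicate n z) z = (-1 : IS S) ^ n * Imap z (List.replicate n z) x) := by
  refine ⟨fun n => ?_, fun x n => ?_⟩
  · rw [Imap_path_reversal z (a 0), length_wz_ofFn z (fun i => a i.succ),
      reverse_wz_ofFn z (fun i => a i.succ)]
    congr 4
    funext j
    congr 2 <;> ext <;> simp [Fin.val_rev] <;> omega
  · simpa using Imap_path_reversal z x (List.replicate n z)
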